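/- If Λ ⊆ ℝ^N is a Delone set and there exists a finite set F with Λ − Λ ⊆ Λ + F, then Λ − Λ is uniformly discrete. -/

import Mathlib

/-!
Applying `Λ - Λ ⊆ Λ + F` twice gives `(Λ - Λ) - (Λ - Λ) ⊆ Λ + (F + (F - F))`. The right-hand side
is a finite union of translates of the uniformly discrete set `Λ`, so only finitely many of its
points lie near `0`; hence differences of distinct points of `Λ - Λ` stay away from `0`.
-/

open scoped Pointwise

open Metric Bornology

namespace Set

theorem sub_sub_sub_subset_of_sub_subset_add {α : Type*} [AddCommGroup α] {s t : Set α}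
    (h : s - s ⊆ s + t) : (s - s) - (s - s) ⊆ s + (t + (t - t)) :=
  calc (s - s) - (s - s) ⊆ (s + t) - (s + t) := sub_subset_sub h h
    _ = (s - s) + (t - t) := add_sub_add_comm s t s t
    _ ⊆ (s + t) + (t - t) := add_subset_add_right h
    _ = s + (t + (t - t)) := add_assoc s t (t - t)

end Set

namespace Metric

theorem finite_isBounded_inter_of_pairwise_le_dist {X : Type*} [MetricSpace X] [ProperSpace X]
    {s K : Set X} {ε : ℝ} (hε : 0 < ε) (hs : s.Pairwise (ε ≤ dist · ·)) (hK : IsBounded K) :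
    (K ∩ s).Finite :=
  have hdisc : DiscreteTopology s :=
    .of_forall_le_dist hε fun x y hxy => hs x.2 y.2 (Subtype.coe_ne_coe.2 hxy)
  finite_isBounded_inter_isClosed (isDiscrete_iff_discreteTopology.2 hdisc) hK
    (isClosed_of_pairwise_le_dist hε hs)

theorem finite_isBounded_inter_add {E : Type*} [SeminormedAddCommGroup E] {s t K : Set E}
    (hs : ∀ K : Set E, IsBounded K → (K ∩ s).Finite) (ht : t.Finite) (hK : IsBounded K) :
    (K ∩ (s + t)).Finite := by
  refine ((hs _ (hK.sub ht.isBounded)).add ht).subset ?_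
  rintro _ ⟨hx, a, ha, b, hb, rfl⟩
  exact ⟨a, ⟨⟨a + b, hx, b, hb, add_sub_cancel_right a b⟩, ha⟩, b, hb, rfl⟩

theorem exists_pos_le_dist_of_sub_subset {E : Type*} [NormedAddCommGroup E] {D S : Set E}
    (hS : (closedBall 0 1 ∩ S).Finite) (hD : D - D ⊆ S) :
    ∃ s > (0 : ℝ), ∀ u ∈ D, ∀ v ∈ D, u ≠ v → s ≤ dist u v := by
  have hnhds : ((closedBall 0 1 ∩ S) \ {0})ᶜ ∈ nhds (0 : E) :=
    hS.sdiff.isClosed.isOpen_compl.mem_nhds fun h => h.2 rfl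
  obtain ⟨ε, hε, hball⟩ := mem_nhds_iff.1 hnhds
  refine ⟨min ε 1, lt_min hε one_pos, fun u hu v hv huv => ?_⟩
  by_contra! hlt
  have hdist : dist (u - v) 0 < min ε 1 := by rwa [dist_zero_right, ← dist_eq_norm]
  exact hball (mem_ball.2 (hdist.trans_le (min_le_left _ _)))
    ⟨⟨mem_closedBall.2 (hdist.le.trans (min_le_right _ _)), hD (Set.sub_mem_sub hu hv)⟩,
      sub_ne_zero.2 huv⟩

end Metric

theorem lagarias_implies_meyer_general (N : ℕ) (Λ : Set (EuclideanSpace ℝ (Fin N)))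
    (r : ℝ) (hr : 0 < r)
    (hud : ∀ x ∈ Λ, ∀ y ∈ Λ, x ≠ y → 2 * r ≤ dist x y)
    (F : Set (EuclideanSpace ℝ (Fin N))) (hF : F.Finite)
    (h : Λ - Λ ⊆ Λ + F) :
    ∃ s > (0 : ℝ), ∀ u ∈ Λ - Λ, ∀ v ∈ Λ - Λ, u ≠ v → s ≤ dist u v := by
  have hΛ : ∀ K, IsBounded K → (K ∩ Λ).Finite := fun K hK =>
    finite_isBounded_inter_of_pairwise_le_dist (by positivity) hud hK
  exact exists_pos_le_dist_of_sub_subset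
    (finite_isBounded_inter_add hΛ (hF.add (hF.sub hF)) isBounded_closedBall)
    (Set.sub_sub_sub_subset_of_sub_subset_add h)

theorem lagarias_implies_meyer (N : ℕ) (Λ : Set (EuclideanSpace ℝ (Fin N)))
    (r R : ℝ) (hr : 0 < r) (hR : 0 < R)
    (hud : ∀ x ∈ Λ, ∀ y ∈ Λ, x ≠ y → 2 * r ≤ dist x y)
    (hrd : ∀ y : EuclideanSpace ℝ (Fin N), ∃ x ∈ Λ, dist x y ≤ R)
    (F : Set (EuclideanSpace ℝ (Fin N))) (hF : F.Finite)
    (h : Λ - Λ ⊆ Λ + F) :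
    ∃ s > (0 : ℝ), ∀ u ∈ Λ - Λ, ∀ v ∈ Λ - Λ, u ≠ v → s ≤ dist u v :=
  lagarias_implies_meyer_general N Λ r hr hud F hF h
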